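/- There exist constants C > 0 and T₀ > 0 such that for every zero ρ' = β' + iγ' of ζ'(s) with 0 ≤ β' ≤ 1, γ' ≥ T₀, and ζ(ρ') ≠ 0 and ζ(1 − β' + iγ') ≠ 0, one has |Re(ζ'(ρ')/ζ(ρ')) − Re(ζ'(1 − β' + iγ')/ζ(1 − β' + iγ')) − log γ'| ≤ C. -/

import Mathlib

open Complex Filter Set Topology


lemma hasDerivAt_conj_conj {f : ℂ → ℂ} {f' z : ℂ}
    (h : HasDerivAt f f' ((starRingEnd ℂ) z)) :
    HasDerivAt (fun x => (starRingEnd ℂ) (f ((starRingEnd ℂ) x))) ((starRingEnd ℂ) f') z := by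
  rw [hasDerivAt_iff_tendsto_slope] at h ⊢
  have hc : Tendsto (starRingEnd ℂ) (𝓝[≠] z) (𝓝[≠] ((starRingEnd ℂ) z)) := by
    apply Tendsto.inf (Complex.continuous_conj.tendsto z)
    refine tendsto_principal.2 ?_
    rw [eventually_principal]
    intro x hx
    simp only [mem_compl_iff, mem_singleton_iff] at hx ⊢
    exact fun hxx => hx ((starRingEnd ℂ).injective hxx)
  have h2 : Tendsto (fun u => (starRingEnd ℂ) (slope f ((starRingEnd ℂ) z) ((starRingEnd ℂ) u)))
      (𝓝[≠] z) (𝓝 ((starRingEnd ℂ) f')) :=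
    (Complex.continuous_conj.tendsto f').comp (h.comp hc)
  refine h2.congr' ?_
  filter_upwards [self_mem_nhdsWithin] with u hu
  simp [slope_def_field, map_div₀, map_sub]


lemma riemannZeta_conj' {s : ℂ} (hs : s ≠ 1) :
    riemannZeta ((starRingEnd ℂ) s) = (starRingEnd ℂ) (riemannZeta s) := by
  have key : EqOn (fun z => (starRingEnd ℂ) (riemannZeta ((starRingEnd ℂ) z))) riemannZeta
      {(1 : ℂ)}ᶜ := by
    have hU : IsOpen ({(1 : ℂ)}ᶜ) := isOpen_compl_singleton
    have hUc : IsPreconnected ({(1 : ℂ)}ᶜ) :=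
      (isConnected_compl_singleton_of_one_lt_rank
        (rank_real_complex ▸ by norm_num) 1).isPreconnected
    have hf : AnalyticOnNhd ℂ (fun z => (starRingEnd ℂ) (riemannZeta ((starRingEnd ℂ) z)))
        ({(1 : ℂ)}ᶜ) := by
      refine DifferentiableOn.analyticOnNhd (fun z hz => ?_) hU
      have hz1 : (starRingEnd ℂ) z ≠ 1 := by
        simp only [mem_compl_iff, mem_singleton_iff] at hz
        intro h; apply hz
        have := congrArg (starRingEnd ℂ) h
        simpa using this
      exact (hasDerivAt_conj_conj
        (differentiableAt_riemannZeta hz1).hasDerivAt).differentiableAt.differentiableWithinAt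
    have hg : AnalyticOnNhd ℂ riemannZeta ({(1 : ℂ)}ᶜ) :=
      DifferentiableOn.analyticOnNhd
        (fun z hz => (differentiableAt_riemannZeta hz).differentiableWithinAt) hU
    refine hf.eqOn_of_preconnected_of_eventuallyEq hg hUc (show (2:ℂ) ∈ ({(1:ℂ)}ᶜ : Set ℂ) by norm_num) ?_
    have hV : {z : ℂ | 1 < z.re} ∈ 𝓝 (2 : ℂ) := by
      refine (isOpen_lt continuous_const Complex.continuous_re).mem_nhds ?_
      norm_num
    filter_upwards [hV] with z hz
    have hz' : 1 < ((starRingEnd ℂ) z).re := by simpa using hz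
    rw [zeta_eq_tsum_one_div_nat_add_one_cpow hz', zeta_eq_tsum_one_div_nat_add_one_cpow hz]
    simp only [starRingEnd_apply]
    rw [tsum_star]
    congr 1
    funext n
    have hpos : (0 : ℝ) < (n : ℝ) + 1 := by positivity
    have harg : ((n : ℂ) + 1).arg ≠ Real.pi := by
      rw [show ((n : ℂ) + 1) = ((n + 1 : ℝ) : ℂ) by push_cast; ring,
        Complex.arg_ofReal_of_nonneg hpos.le]
      exact Real.pi_ne_zero.symm
    have := Complex.conj_cpow ((n : ℂ) + 1) z harg
    rw [show (starRingEnd ℂ) ((n : ℂ) + 1) = (n : ℂ) + 1 by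
      simp [Complex.conj_natCast]] at this
    rw [starRingEnd_apply, starRingEnd_apply] at this
    rw [star_div₀, star_one, ← this]
  have hs' : (starRingEnd ℂ) s ∈ ({(1 : ℂ)}ᶜ : Set ℂ) := by
    simp only [mem_compl_iff, mem_singleton_iff]
    intro h; apply hs
    have := congrArg (starRingEnd ℂ) h
    simpa using this
  have := key hs'
  simp only at this
  rw [← this]
  simp


lemma deriv_riemannZeta_conj {s : ℂ} (hs : s ≠ 1) :
    deriv riemannZeta ((starRingEnd ℂ) s) = (starRingEnd ℂ) (deriv riemannZeta s) := by
  have hd : HasDerivAt riemannZeta (deriv riemannZeta s) s :=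
    (differentiableAt_riemannZeta hs).hasDerivAt
  have h2 : HasDerivAt (fun x => (starRingEnd ℂ) (riemannZeta ((starRingEnd ℂ) x)))
      ((starRingEnd ℂ) (deriv riemannZeta s)) ((starRingEnd ℂ) s) := by
    apply hasDerivAt_conj_conj
    rwa [Complex.conj_conj]
  have h3 : HasDerivAt riemannZeta ((starRingEnd ℂ) (deriv riemannZeta s)) ((starRingEnd ℂ) s) := by
    apply h2.congr_of_eventuallyEq
    have hmem : {(1:ℂ)}ᶜ ∈ 𝓝 ((starRingEnd ℂ) s) := by
      refine isOpen_compl_singleton.mem_nhds ?_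
      simp only [mem_compl_iff, mem_singleton_iff]
      intro h; exact hs (by simpa using congrArg (starRingEnd ℂ) h)
    filter_upwards [hmem] with x hx
    simp only [mem_compl_iff, mem_singleton_iff] at hx
    have hx1 : (starRingEnd ℂ) x ≠ 1 := fun h => hx (by simpa using congrArg (starRingEnd ℂ) h)
    rw [show (starRingEnd ℂ) x = (starRingEnd ℂ) x from rfl]
    rw [riemannZeta_conj' (show x ≠ 1 from hx)]
    simp
  exact h3.deriv

lemma deriv_Gamma_conj {s : ℂ} (hs : ∀ m : ℕ, s ≠ -m) :
    deriv Complex.Gamma ((starRingEnd ℂ) s) = (starRingEnd ℂ) (deriv Complex.Gamma s) := by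
  have hd : HasDerivAt Complex.Gamma (deriv Complex.Gamma s) s :=
    (Complex.differentiableAt_Gamma s hs).hasDerivAt
  have h2 : HasDerivAt (fun x => (starRingEnd ℂ) (Complex.Gamma ((starRingEnd ℂ) x)))
      ((starRingEnd ℂ) (deriv Complex.Gamma s)) ((starRingEnd ℂ) s) := by
    apply hasDerivAt_conj_conj
    rwa [Complex.conj_conj]
  have h3 : HasDerivAt Complex.Gamma ((starRingEnd ℂ) (deriv Complex.Gamma s))
      ((starRingEnd ℂ) s) := by
    apply h2.congr_of_eventuallyEq
    filter_upwards with x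
    rw [Complex.Gamma_conj]
    simp
  exact h3.deriv

/-- digamma-type conj: `logDeriv Γ (conj s) = conj (logDeriv Γ s)`. -/
lemma logDeriv_Gamma_conj {s : ℂ} (hs : ∀ m : ℕ, s ≠ -m) :
    logDeriv Complex.Gamma ((starRingEnd ℂ) s) = (starRingEnd ℂ) (logDeriv Complex.Gamma s) := by
  rw [logDeriv_apply, logDeriv_apply, deriv_Gamma_conj hs, Complex.Gamma_conj, ← map_div₀]


lemma Gamma_ne_zero_of_im_ne {z : ℂ} (hz : z.im ≠ 0) : Complex.Gamma z ≠ 0 := by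
  refine Complex.Gamma_ne_zero fun m => ?_
  intro h; apply hz; rw [h]; simp

lemma differentiableAt_Gamma_of_im_ne {z : ℂ} (hz : z.im ≠ 0) :
    DifferentiableAt ℂ Complex.Gamma z := by
  refine Complex.differentiableAt_Gamma z fun m => ?_
  intro h; apply hz; rw [h]; simp

lemma logDeriv_Gamma_shift {z c : ℂ} (h : DifferentiableAt ℂ Complex.Gamma (z + c)) :
    logDeriv (fun s => Complex.Gamma (s + c)) z = logDeriv Complex.Gamma (z + c) := by
  have e : logDeriv (Complex.Gamma ∘ (fun s => s + c)) z =
      logDeriv Complex.Gamma (z + c) * deriv (fun s : ℂ => s + c) z :=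
    logDeriv_comp (f := Complex.Gamma) (g := fun s => s + c) h
      (differentiableAt_fun_id.add_const c)
  simpa [Function.comp_def] using e

lemma logDeriv_Gamma_two_mul {z : ℂ} (h : DifferentiableAt ℂ Complex.Gamma (2 * z)) :
    logDeriv (fun s => Complex.Gamma (2 * s)) z = 2 * logDeriv Complex.Gamma (2 * z) := by
  have e : logDeriv (Complex.Gamma ∘ (fun s => 2 * s)) z =
      logDeriv Complex.Gamma (2 * z) * deriv (fun s : ℂ => 2 * s) z :=
    logDeriv_comp (f := Complex.Gamma) (g := fun s => 2 * s) h
      (differentiableAt_fun_id.const_mul 2)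
  have hd : deriv (fun s : ℂ => 2 * s) z = (2 : ℂ) := by
    simpa using ((hasDerivAt_id z).const_mul (2:ℂ)).deriv
  rw [show logDeriv (fun s => Complex.Gamma (2 * s)) z =
    logDeriv (Complex.Gamma ∘ (fun s => 2 * s)) z from rfl, e, hd]
  ring

lemma hasDerivAt_two_cpow (z : ℂ) :
    HasDerivAt (fun s : ℂ => (2 : ℂ) ^ (1 - 2 * s))
      ((2 : ℂ) ^ (1 - 2 * z) * Complex.log 2 * (-2)) z := by
  have hg : HasDerivAt (fun s : ℂ => 1 - 2 * s) (-2) z := by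
    simpa using ((hasDerivAt_id z).const_mul (2:ℂ)).const_sub 1
  have hf : HasDerivAt (fun w : ℂ => (2 : ℂ) ^ w)
      ((2 : ℂ) ^ (1 - 2 * z) * Complex.log 2) (1 - 2 * z) :=
    (hasStrictDerivAt_const_cpow (Or.inl two_ne_zero)).hasDerivAt
  exact hf.comp z hg

lemma two_cpow_ne_zero (w : ℂ) : (2 : ℂ) ^ w ≠ 0 := by
  simp [Complex.cpow_eq_zero_iff]

lemma logDeriv_two_cpow (z : ℂ) :
    logDeriv (fun s : ℂ => (2 : ℂ) ^ (1 - 2 * s)) z = -2 * (Real.log 2 : ℂ) := by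
  rw [logDeriv_apply, (hasDerivAt_two_cpow z).deriv]
  rw [div_eq_iff (two_cpow_ne_zero _)]
  have : ((Real.log 2 : ℝ) : ℂ) = Complex.log 2 := by
    rw [Complex.ofReal_log (by norm_num : (0:ℝ) ≤ 2)]
    norm_num
  rw [this]; ring

/-- Duplication formula for the digamma function. -/
lemma logDeriv_Gamma_duplication {z : ℂ} (hz : z.im ≠ 0) :
    logDeriv Complex.Gamma (2 * z) =
      (Real.log 2 : ℂ) + (logDeriv Complex.Gamma z + logDeriv Complex.Gamma (z + 1 / 2)) / 2 := by
  have hz2 : (2 * z).im ≠ 0 := by simpa using hz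
  have hzh : (z + 1 / 2).im ≠ 0 := by simpa using hz
  have key : logDeriv (fun s => Complex.Gamma s * Complex.Gamma (s + 1 / 2)) z =
      logDeriv (fun s => Complex.Gamma (2 * s) * (2 : ℂ) ^ (1 - 2 * s) *
        ((Real.sqrt Real.pi : ℝ) : ℂ)) z := by
    congr 1
    funext s
    exact Complex.Gamma_mul_Gamma_add_half s
  have hL : logDeriv (fun s => Complex.Gamma s * Complex.Gamma (s + 1 / 2)) z =
      logDeriv Complex.Gamma z + logDeriv Complex.Gamma (z + 1 / 2) := by
    rw [logDeriv_mul (f := Complex.Gamma) (g := fun s => Complex.Gamma (s + 1 / 2)) z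
      (Gamma_ne_zero_of_im_ne hz) (Gamma_ne_zero_of_im_ne hzh)
      (differentiableAt_Gamma_of_im_ne hz)
      ((differentiableAt_Gamma_of_im_ne hzh).comp z (differentiableAt_fun_id.add_const _)),
      logDeriv_Gamma_shift (differentiableAt_Gamma_of_im_ne hzh)]
  have hR : logDeriv (fun s => Complex.Gamma (2 * s) * (2 : ℂ) ^ (1 - 2 * s) *
        ((Real.sqrt Real.pi : ℝ) : ℂ)) z =
      2 * logDeriv Complex.Gamma (2 * z) + (-2 * (Real.log 2 : ℂ)) := by
    rw [logDeriv_mul_const (f := fun s => Complex.Gamma (2 * s) * (2 : ℂ) ^ (1 - 2 * s)) z _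
      (by
        simp only [ne_eq, Complex.ofReal_eq_zero]
        positivity)]
    rw [logDeriv_mul (f := fun s => Complex.Gamma (2 * s)) (g := fun s : ℂ => (2:ℂ) ^ (1 - 2 * s))
      z (Gamma_ne_zero_of_im_ne hz2) (two_cpow_ne_zero _)
      ((differentiableAt_Gamma_of_im_ne hz2).comp z (differentiableAt_fun_id.const_mul 2))
      (hasDerivAt_two_cpow z).differentiableAt]
    rw [logDeriv_Gamma_two_mul (differentiableAt_Gamma_of_im_ne hz2), logDeriv_two_cpow]
  rw [hL, hR] at key
  linear_combination -key / 2


/-- Dyadic Gauss multiplication for the digamma function. -/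
lemma logDeriv_Gamma_dyadic (n : ℕ) :
    ∀ z : ℂ, z.im ≠ 0 →
      logDeriv Complex.Gamma ((2 ^ n : ℂ) * z) = (n : ℂ) * (Real.log 2 : ℂ) +
        (∑ j ∈ Finset.range (2 ^ n), logDeriv Complex.Gamma (z + (j : ℂ) / (2 ^ n : ℂ))) /
          (2 ^ n : ℂ) := by
  induction n with
  | zero => intro z hz; simp
  | succ n ih =>
    intro z hz
    have h2z : (2 * z).im ≠ 0 := by simpa using hz
    have step : logDeriv Complex.Gamma ((2 ^ (n+1) : ℂ) * z) =
        (n : ℂ) * (Real.log 2 : ℂ) +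
        (∑ j ∈ Finset.range (2 ^ n), logDeriv Complex.Gamma (2 * z + (j : ℂ) / (2 ^ n : ℂ))) /
          (2 ^ n : ℂ) := by
      have := ih (2 * z) h2z
      rw [show (2 ^ (n+1) : ℂ) * z = (2 ^ n : ℂ) * (2 * z) by ring]
      exact this
    have dup : ∀ j ∈ Finset.range (2 ^ n),
        logDeriv Complex.Gamma (2 * z + (j : ℂ) / (2 ^ n : ℂ)) =
        (Real.log 2 : ℂ) + (logDeriv Complex.Gamma (z + (j : ℂ) / (2 ^ (n+1) : ℂ)) +
          logDeriv Complex.Gamma (z + ((2 ^ n + j : ℕ) : ℂ) / (2 ^ (n+1) : ℂ))) / 2 := by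
      intro j _
      have hcast : (j : ℂ) / (2 ^ (n+1) : ℂ) = (((j : ℝ) / (2 ^ (n+1) : ℝ) : ℝ) : ℂ) := by
        push_cast; ring
      have him : (z + (j : ℂ) / (2 ^ (n+1) : ℂ)).im ≠ 0 := by
        rw [Complex.add_im, hcast, Complex.ofReal_im, add_zero]
        exact hz
      have hdup := logDeriv_Gamma_duplication him
      rw [show 2 * (z + (j : ℂ) / (2 ^ (n+1) : ℂ)) = 2 * z + (j : ℂ) / (2 ^ n : ℂ) by
        push_cast; ring] at hdup
      rw [hdup, show z + (j : ℂ) / (2 ^ (n+1) : ℂ) + 1 / 2 =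
        z + ((2 ^ n + j : ℕ) : ℂ) / (2 ^ (n+1) : ℂ) from by
          push_cast
          have : ((2 : ℂ) ^ (n + 1)) ≠ 0 := pow_ne_zero _ two_ne_zero
          field_simp
          ring]
    rw [step, Finset.sum_congr rfl dup, Finset.sum_add_distrib, Finset.sum_const,
      Finset.card_range]
    rw [show (2 : ℕ) ^ (n + 1) = 2 ^ n + 2 ^ n by ring, Finset.sum_range_add]
    rw [show ∑ j ∈ Finset.range (2 ^ n),
        (logDeriv Complex.Gamma (z + (j : ℂ) / (2 ^ (n+1) : ℂ)) +
          logDeriv Complex.Gamma (z + ((2 ^ n + j : ℕ) : ℂ) / (2 ^ (n+1) : ℂ))) / 2 =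
      ((∑ j ∈ Finset.range (2 ^ n), logDeriv Complex.Gamma (z + (j : ℂ) / (2 ^ (n+1) : ℂ))) +
       (∑ j ∈ Finset.range (2 ^ n),
          logDeriv Complex.Gamma (z + ((2 ^ n + j : ℕ) : ℂ) / (2 ^ (n+1) : ℂ)))) / 2 by
      rw [← Finset.sum_add_distrib, Finset.sum_div]]
    generalize (∑ j ∈ Finset.range (2 ^ n),
      logDeriv Complex.Gamma (z + (j : ℂ) / (2 ^ (n+1) : ℂ))) = S₁
    generalize (∑ j ∈ Finset.range (2 ^ n),
      logDeriv Complex.Gamma (z + ((2 ^ n + j : ℕ) : ℂ) / (2 ^ (n+1) : ℂ))) = S₂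
    have h2n : ((2 : ℂ) ^ n) ≠ 0 := pow_ne_zero _ two_ne_zero
    have h2n1 : ((2 : ℂ) ^ (n + 1)) ≠ 0 := pow_ne_zero _ two_ne_zero
    push_cast
    field_simp
    ring


lemma psi_bounded_on_box : ∃ B : ℝ, 0 ≤ B ∧ ∀ w : ℂ, 0 ≤ w.re → w.re ≤ 2 → 1 ≤ w.im → w.im ≤ 2 →
    ‖logDeriv Complex.Gamma w‖ ≤ B := by
  set K : Set ℂ := {w | w.re ∈ Icc (0:ℝ) 2 ∧ w.im ∈ Icc (1:ℝ) 2} with hK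
  have hKc : IsCompact K := by
    have hclosed : IsClosed K :=
      ((isClosed_Icc.preimage Complex.continuous_re).inter
        (isClosed_Icc.preimage Complex.continuous_im))
    have hbdd : Bornology.IsBounded K := by
      refine (Metric.isBounded_iff_subset_closedBall 0).2 ⟨4, fun w hw => ?_⟩
      obtain ⟨h1, h2⟩ := hw
      simp only [Metric.mem_closedBall, dist_zero_right]
      calc ‖w‖ = ‖w‖ := rfl
        _ ≤ |w.re| + |w.im| := Complex.norm_le_abs_re_add_abs_im w
        _ ≤ 2 + 2 := add_le_add (abs_le.2 ⟨by linarith [h1.1], h1.2⟩)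
            (abs_le.2 ⟨by linarith [h2.1], h2.2⟩)
        _ ≤ 4 := by norm_num
    exact Metric.isCompact_of_isClosed_isBounded hclosed hbdd
  have hU : IsOpen {w : ℂ | 0 < w.im} := isOpen_lt continuous_const Complex.continuous_im
  have hGdiff : DifferentiableOn ℂ Complex.Gamma {w : ℂ | 0 < w.im} := fun w hw =>
    (differentiableAt_Gamma_of_im_ne (ne_of_gt hw)).differentiableWithinAt
  have hGan : AnalyticOnNhd ℂ Complex.Gamma {w : ℂ | 0 < w.im} :=
    hGdiff.analyticOnNhd hU
  have hderiv_cont : ContinuousOn (deriv Complex.Gamma) {w : ℂ | 0 < w.im} :=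
    hGan.deriv.continuousOn
  have hcont : ContinuousOn (logDeriv Complex.Gamma) {w : ℂ | 0 < w.im} := by
    apply hderiv_cont.div (hGdiff.continuousOn)
    exact fun w hw => Gamma_ne_zero_of_im_ne (ne_of_gt hw)
  have hKU : K ⊆ {w : ℂ | 0 < w.im} := fun w hw => lt_of_lt_of_le one_pos hw.2.1
  obtain ⟨B, hB⟩ := hKc.exists_bound_of_continuousOn (hcont.mono hKU)
  refine ⟨max B 0, le_max_right _ _, fun w h1 h2 h3 h4 => ?_⟩
  exact le_trans (hB w ⟨⟨h1, h2⟩, ⟨h3, h4⟩⟩) (le_max_left _ _)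



lemma mk_re' (a b : ℝ) : ((a:ℂ) + (b:ℂ) * Complex.I).re = a := by
  simp only [Complex.add_re, Complex.ofReal_re, Complex.mul_re, Complex.I_re, Complex.I_im,
    Complex.ofReal_im, mul_zero, mul_one, zero_mul, sub_zero, zero_sub, add_zero, zero_add]

lemma mk_im' (a b : ℝ) : ((a:ℂ) + (b:ℂ) * Complex.I).im = b := by
  simp only [Complex.add_im, Complex.ofReal_im, Complex.mul_im, Complex.I_re, Complex.I_im,
    Complex.ofReal_re, mul_zero, mul_one, zero_mul, sub_zero, zero_sub, add_zero, zero_add]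

lemma re_psi_asymp : ∃ B' : ℝ, 0 ≤ B' ∧ ∀ σ t : ℝ, 0 ≤ σ → σ ≤ 1 → 1 ≤ t →
    |(logDeriv Complex.Gamma ((σ : ℂ) + (t : ℂ) * Complex.I)).re - Real.log t| ≤ B' := by
  obtain ⟨B, hB0, hB⟩ := psi_bounded_on_box
  refine ⟨B + Real.log 2, by positivity, fun σ t hσ0 hσ1 ht => ?_⟩
  have ht0 : (0:ℝ) < t := lt_of_lt_of_le one_pos ht
  set n : ℕ := ⌊Real.logb 2 t⌋₊ with hn
  have hlogb0 : 0 ≤ Real.logb 2 t := Real.logb_nonneg (by norm_num) ht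
  have h2n_le : (2:ℝ) ^ n ≤ t := by
    calc (2:ℝ) ^ n = (2:ℝ) ^ (n : ℝ) := by rw [Real.rpow_natCast]
      _ ≤ (2:ℝ) ^ (Real.logb 2 t) :=
          Real.rpow_le_rpow_of_exponent_le (by norm_num) (Nat.floor_le hlogb0)
      _ = t := Real.rpow_logb (by norm_num) (by norm_num) ht0
  have h2n_gt : t < (2:ℝ) ^ (n + 1) := by
    calc t = (2:ℝ) ^ (Real.logb 2 t) := (Real.rpow_logb (by norm_num) (by norm_num) ht0).symm
      _ < (2:ℝ) ^ (((n:ℝ) + 1)) :=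
          Real.rpow_lt_rpow_of_exponent_lt (by norm_num) (Nat.lt_floor_add_one _)
      _ = (2:ℝ) ^ (n + 1) := by
          rw [show ((n:ℝ) + 1) = ((n + 1 : ℕ) : ℝ) by push_cast; ring, Real.rpow_natCast]
  have h2npos : (0:ℝ) < (2:ℝ) ^ n := by positivity
  have h1le2n : (1:ℝ) ≤ 2 ^ n := one_le_pow₀ (by norm_num)
  set z : ℂ := ((σ / 2 ^ n : ℝ) : ℂ) + ((t / 2 ^ n : ℝ) : ℂ) * Complex.I with hz
  have hzim_ne : z.im ≠ 0 := by
    rw [hz, mk_im']; positivity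
  have hmul : (2 ^ n : ℂ) * z = (σ : ℂ) + (t : ℂ) * Complex.I := by
    rw [hz]
    have h0 : ((2:ℝ) ^ n : ℝ) ≠ 0 := ne_of_gt h2npos
    push_cast
    field_simp
  have key := logDeriv_Gamma_dyadic n z hzim_ne
  rw [hmul] at key
  have hsummand : ∀ j ∈ Finset.range (2 ^ n),
      ‖logDeriv Complex.Gamma (z + (j : ℂ) / (2 ^ n : ℂ))‖ ≤ B := by
    intro j hj
    have hjlt : (j : ℝ) < 2 ^ n := by
      have h := Finset.mem_range.1 hj
      calc (j:ℝ) < ((2 ^ n : ℕ) : ℝ) := by exact_mod_cast h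
        _ = (2:ℝ) ^ n := by push_cast; ring
    have hw : z + (j : ℂ) / (2 ^ n : ℂ) =
        (((σ / 2 ^ n + j / 2 ^ n : ℝ)) : ℂ) + ((t / 2 ^ n : ℝ) : ℂ) * Complex.I := by
      rw [hz]; push_cast; ring
    rw [hw]
    have hre : ((((σ / 2 ^ n + j / 2 ^ n : ℝ)) : ℂ) + ((t / 2 ^ n : ℝ) : ℂ) * Complex.I).re
        = σ / 2 ^ n + j / 2 ^ n := mk_re' _ _
    have him : ((((σ / 2 ^ n + j / 2 ^ n : ℝ)) : ℂ) + ((t / 2 ^ n : ℝ) : ℂ) * Complex.I).im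
        = t / 2 ^ n := mk_im' _ _
    apply hB
    · rw [hre]; positivity
    · rw [hre]
      have e1 : σ / 2 ^ n ≤ 1 := by
        rw [div_le_one h2npos]; linarith
      have e2 : (j:ℝ) / 2 ^ n ≤ 1 := by
        rw [div_le_one h2npos]; linarith
      linarith
    · rw [him, le_div_iff₀ h2npos]; linarith
    · rw [him, div_le_iff₀ h2npos]
      have : (2:ℝ) ^ (n+1) = 2 * 2 ^ n := by ring
      linarith [h2n_gt, this ▸ h2n_gt]
  -- take real parts
  have hre_key : (logDeriv Complex.Gamma ((σ : ℂ) + (t : ℂ) * Complex.I)).re =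
      (n : ℝ) * Real.log 2 +
      ((∑ j ∈ Finset.range (2 ^ n), logDeriv Complex.Gamma (z + (j : ℂ) / (2 ^ n : ℂ))) /
        (2 ^ n : ℂ)).re := by
    rw [key, Complex.add_re]
    congr 1
    rw [show (n : ℂ) * (Real.log 2 : ℂ) = (((n : ℝ) * Real.log 2 : ℝ) : ℂ) by norm_cast]
    exact Complex.ofReal_re _
  set S : ℂ := ∑ j ∈ Finset.range (2 ^ n), logDeriv Complex.Gamma (z + (j : ℂ) / (2 ^ n : ℂ))
    with hS
  have hSnorm : ‖S‖ ≤ (2:ℝ) ^ n * B := by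
    calc ‖S‖ ≤ ∑ j ∈ Finset.range (2 ^ n),
        ‖logDeriv Complex.Gamma (z + (j : ℂ) / (2 ^ n : ℂ))‖ := norm_sum_le _ _
      _ ≤ ∑ _j ∈ Finset.range (2 ^ n), B := Finset.sum_le_sum hsummand
      _ = (2:ℝ) ^ n * B := by
          rw [Finset.sum_const, Finset.card_range, nsmul_eq_mul]
          push_cast; ring
  have hdivnorm : |(S / (2 ^ n : ℂ)).re| ≤ B := by
    calc |(S / (2 ^ n : ℂ)).re| ≤ ‖S / (2 ^ n : ℂ)‖ := Complex.abs_re_le_norm _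
      _ = ‖S‖ / (2:ℝ) ^ n := by
          rw [norm_div]
          congr 1
          rw [show ((2:ℂ) ^ n) = (((2:ℝ) ^ n : ℝ) : ℂ) by push_cast; ring]
          simp [abs_of_pos h2npos]
      _ ≤ ((2:ℝ) ^ n * B) / (2:ℝ) ^ n := by
          gcongr
      _ = B := by field_simp
  have hlog1 : (n : ℝ) * Real.log 2 ≤ Real.log t := by
    have e : Real.log ((2:ℝ) ^ n) = (n:ℝ) * Real.log 2 := by
      rw [Real.log_pow]
    rw [← e]
    exact Real.log_le_log (by positivity) h2n_le
  have hlog2 : Real.log t ≤ (n : ℝ) * Real.log 2 + Real.log 2 := by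
    calc Real.log t ≤ Real.log ((2:ℝ) ^ (n + 1)) :=
          Real.log_le_log ht0 (le_of_lt h2n_gt)
      _ = ((n:ℝ) + 1) * Real.log 2 := by rw [Real.log_pow]; push_cast; ring
      _ = (n : ℝ) * Real.log 2 + Real.log 2 := by ring
  rw [hre_key]
  rw [abs_le]
  constructor
  · have := (abs_le.1 hdivnorm).1
    linarith
  · have := (abs_le.1 hdivnorm).2
    linarith


lemma pi_cpow_ne_zero (w : ℂ) : ((Real.pi : ℂ)) ^ w ≠ 0 := by
  simp [Complex.cpow_eq_zero_iff, Complex.ofReal_eq_zero, Real.pi_ne_zero]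

lemma hasDerivAt_pi_cpow (u : ℂ) :
    HasDerivAt (fun s : ℂ => ((Real.pi : ℂ)) ^ (-s / 2))
      (((Real.pi : ℂ)) ^ (-u / 2) * Complex.log (Real.pi : ℂ) * (-(1/2))) u := by
  have hg : HasDerivAt (fun s : ℂ => -s / 2) (-(1/2)) u := by
    have := (hasDerivAt_id u).neg.div_const (2:ℂ)
    norm_num at this ⊢
    exact this
  have hf : HasDerivAt (fun w : ℂ => ((Real.pi : ℂ)) ^ w)
      (((Real.pi : ℂ)) ^ (-u / 2) * Complex.log (Real.pi : ℂ)) (-u / 2) :=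
    (hasStrictDerivAt_const_cpow (Or.inl (by
      simp [Complex.ofReal_eq_zero, Real.pi_ne_zero]))).hasDerivAt
  exact hf.comp u hg

lemma logDeriv_pi_cpow (u : ℂ) :
    logDeriv (fun s : ℂ => ((Real.pi : ℂ)) ^ (-s / 2)) u = -(Real.log Real.pi : ℂ) / 2 := by
  rw [logDeriv_apply, (hasDerivAt_pi_cpow u).deriv, div_eq_iff (pi_cpow_ne_zero _)]
  rw [show Complex.log (Real.pi : ℂ) = ((Real.log Real.pi : ℝ) : ℂ) by
    rw [Complex.ofReal_log Real.pi_pos.le]]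
  ring

lemma Gammaℝ_ne_zero_of_im_ne {u : ℂ} (hu : u.im ≠ 0) : Complex.Gammaℝ u ≠ 0 := by
  rw [ne_eq, Complex.Gammaℝ_eq_zero_iff]
  push_neg
  intro n h
  apply hu
  rw [h]
  simp

lemma differentiableAt_Gammaℝ_of_im_ne {u : ℂ} (hu : u.im ≠ 0) :
    DifferentiableAt ℂ Complex.Gammaℝ u := by
  have heq : Complex.Gammaℝ = fun s : ℂ => ((Real.pi : ℂ)) ^ (-s / 2) * Complex.Gamma (s / 2) :=
    funext fun s => Complex.Gammaℝ_def s
  rw [heq]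
  refine DifferentiableAt.mul (hasDerivAt_pi_cpow u).differentiableAt ?_
  have him : (u / 2).im ≠ 0 := by
    simpa [Complex.div_im] using hu
  exact (differentiableAt_Gamma_of_im_ne him).comp u (differentiableAt_fun_id.div_const 2)

lemma logDeriv_Gammaℝ_eq {u : ℂ} (hu : u.im ≠ 0) :
    logDeriv Complex.Gammaℝ u =
      -(Real.log Real.pi : ℂ) / 2 + logDeriv Complex.Gamma (u / 2) / 2 := by
  have heq : Complex.Gammaℝ = fun s : ℂ => ((Real.pi : ℂ)) ^ (-s / 2) * Complex.Gamma (s / 2) :=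
    funext fun s => Complex.Gammaℝ_def s
  have him : (u / 2).im ≠ 0 := by simpa [Complex.div_im] using hu
  rw [heq]
  rw [logDeriv_mul (f := fun s : ℂ => ((Real.pi : ℂ)) ^ (-s / 2))
    (g := fun s : ℂ => Complex.Gamma (s / 2)) u (pi_cpow_ne_zero _)
    (Gamma_ne_zero_of_im_ne him) (hasDerivAt_pi_cpow u).differentiableAt
    ((differentiableAt_Gamma_of_im_ne him).comp u (differentiableAt_fun_id.div_const 2))]
  rw [logDeriv_pi_cpow]
  congr 1
  have e : logDeriv (Complex.Gamma ∘ (fun s : ℂ => s / 2)) u =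
      logDeriv Complex.Gamma (u / 2) * deriv (fun s : ℂ => s / 2) u :=
    logDeriv_comp (differentiableAt_Gamma_of_im_ne him) (differentiableAt_fun_id.div_const 2)
  have hd : deriv (fun s : ℂ => s / 2) u = 1 / 2 := by
    simpa using ((hasDerivAt_id u).div_const (2:ℂ)).deriv
  rw [show logDeriv (fun s : ℂ => Complex.Gamma (s / 2)) u =
    logDeriv (Complex.Gamma ∘ (fun s : ℂ => s / 2)) u from rfl, e, hd]
  ring

lemma logDeriv_completed_one_sub {u : ℂ} (h0 : u ≠ 0) (h1 : u ≠ 1) :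
    logDeriv completedRiemannZeta (1 - u) = - logDeriv completedRiemannZeta u := by
  have hfun : (fun s : ℂ => completedRiemannZeta (1 - s)) = completedRiemannZeta :=
    funext completedRiemannZeta_one_sub
  have h1u0 : (1 : ℂ) - u ≠ 0 := sub_ne_zero.2 (Ne.symm h1)
  have h1u1 : (1 : ℂ) - u ≠ 1 := by
    intro h; apply h0; linear_combination -h
  have e : logDeriv (completedRiemannZeta ∘ (fun s : ℂ => 1 - s)) u =
      logDeriv completedRiemannZeta (1 - u) * deriv (fun s : ℂ => 1 - s) u :=
    logDeriv_comp (differentiableAt_completedZeta h1u0 h1u1)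
      ((differentiableAt_const 1).sub differentiableAt_fun_id)
  have hd : deriv (fun s : ℂ => 1 - s) u = -1 := by
    simpa using ((hasDerivAt_id u).const_sub (1:ℂ)).deriv
  have lhs : logDeriv (completedRiemannZeta ∘ (fun s : ℂ => 1 - s)) u =
      logDeriv completedRiemannZeta u := by
    rw [show completedRiemannZeta ∘ (fun s : ℂ => 1 - s) =
      (fun s : ℂ => completedRiemannZeta (1 - s)) from rfl, hfun]
  rw [lhs, hd] at e
  linear_combination e


lemma ne_neg_nat_of_im_ne {z : ℂ} (hz : z.im ≠ 0) : ∀ m : ℕ, z ≠ -m := by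
  intro m h
  apply hz
  rw [h]
  simp

lemma logDeriv_completed_split {u : ℂ} (him : u.im ≠ 0) (hζ : riemannZeta u ≠ 0) :
    logDeriv completedRiemannZeta u = logDeriv Complex.Gammaℝ u + logDeriv riemannZeta u := by
  have hu1 : u ≠ 1 := by intro h; apply him; rw [h]; simp
  have hmem : {s : ℂ | s.im ≠ 0} ∈ 𝓝 u := by
    have : IsOpen {s : ℂ | s.im ≠ 0} := isOpen_compl_singleton.preimage Complex.continuous_im
    exact this.mem_nhds him
  have heq : completedRiemannZeta =ᶠ[𝓝 u] fun s => Complex.Gammaℝ s * riemannZeta s := by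
    filter_upwards [hmem] with s hs
    have hs0 : s ≠ 0 := by intro h; apply hs; rw [h]; simp
    have hG : Complex.Gammaℝ s ≠ 0 := Gammaℝ_ne_zero_of_im_ne hs
    rw [riemannZeta_def_of_ne_zero hs0]
    field_simp
  have e1 : logDeriv completedRiemannZeta u =
      logDeriv (fun s => Complex.Gammaℝ s * riemannZeta s) u := by
    rw [logDeriv_apply, logDeriv_apply, heq.deriv_eq, heq.eq_of_nhds]
  rw [e1]
  exact logDeriv_mul (f := Complex.Gammaℝ) (g := riemannZeta) u
    (Gammaℝ_ne_zero_of_im_ne him) hζ (differentiableAt_Gammaℝ_of_im_ne him)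
    (differentiableAt_riemannZeta hu1)


/-- **Equation (7)** (Garaev–Yıldırım): there are constants `C > 0`, `T₀ > 0` such that for
any zero `ρ' = β' + iγ'` of `ζ'` with `0 ≤ β' ≤ 1`, `γ' ≥ T₀`, `ζ(ρ') ≠ 0` and
`ζ(1 - β' + iγ') ≠ 0`,
`Re(ζ'(β'+iγ')/ζ(β'+iγ')) - Re(ζ'(1-β'+iγ')/ζ(1-β'+iγ')) = log γ' + O(1)`. -/
theorem re_logDeriv_difference_eq_log :
    ∃ C : ℝ, 0 < C ∧ ∃ T₀ : ℝ, 0 < T₀ ∧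
      ∀ s' : ℂ, deriv riemannZeta s' = 0 → 0 ≤ s'.re → s'.re ≤ 1 → T₀ ≤ s'.im →
        riemannZeta s' ≠ 0 →
        riemannZeta ((1 - s'.re : ℝ) + s'.im * Complex.I) ≠ 0 →
        |(deriv riemannZeta s' / riemannZeta s').re -
            (deriv riemannZeta ((1 - s'.re : ℝ) + s'.im * Complex.I) /
              riemannZeta ((1 - s'.re : ℝ) + s'.im * Complex.I)).re -
            Real.log s'.im| ≤ C := by
  obtain ⟨B', hB'0, hB'⟩ := re_psi_asymp
  have hπ0 : (0:ℝ) ≤ Real.log Real.pi := Real.log_nonneg (by linarith [Real.pi_gt_three])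
  have h20 : (0:ℝ) ≤ Real.log 2 := Real.log_nonneg (by norm_num)
  refine ⟨Real.log Real.pi + Real.log 2 + B' + 1, by linarith, 2, by norm_num, ?_⟩
  intro s' hz hre0 hre1 hT hζs hζw
  set σ : ℝ := s'.re with hσ
  set T : ℝ := s'.im with hTdef
  have hT0 : (0:ℝ) < T := by linarith
  have hTne : T ≠ 0 := ne_of_gt hT0
  have hs'im : s'.im ≠ 0 := hTne
  have hs'1 : s' ≠ 1 := by intro h; apply hs'im; rw [h]; simp
  have hs'0 : s' ≠ 0 := by intro h; apply hs'im; rw [h]; simp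
  set w : ℂ := ((1 - σ : ℝ) : ℂ) + (T : ℂ) * Complex.I with hw
  set v : ℂ := 1 - s' with hv
  have hs'eq : s' = (σ : ℂ) + (T : ℂ) * Complex.I := (Complex.re_add_im s').symm
  have hvw : (starRingEnd ℂ) w = v := by
    rw [hw, hv, hs'eq]
    apply Complex.ext <;> simp
  have hwv : w = (starRingEnd ℂ) v := by
    rw [← hvw, Complex.conj_conj]
  have hvim : v.im ≠ 0 := by
    rw [hv]
    simp only [Complex.sub_im, Complex.one_im]
    simpa using hs'im
  have hv1 : v ≠ 1 := by intro h; apply hvim; rw [h]; simp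
  have hζv : riemannZeta v ≠ 0 := by
    rw [← hvw]
    have hw1 : w ≠ 1 := by
      intro h
      have : w.im = 0 := by rw [h]; simp
      rw [hw] at this
      simp only [Complex.add_im, Complex.ofReal_im, Complex.mul_im, Complex.I_im,
        Complex.ofReal_re, Complex.I_re] at this
      apply hTne
      linarith
    rw [riemannZeta_conj' hw1]
    simpa using hζw
  -- the three logDeriv identities
  have hlds : logDeriv riemannZeta s' = 0 := by
    rw [logDeriv_apply, hz, zero_div]
  have h1 : logDeriv completedRiemannZeta s' = logDeriv Complex.Gammaℝ s' := by
    rw [logDeriv_completed_split hs'im hζs, hlds, add_zero]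
  have h2 : logDeriv completedRiemannZeta v = - logDeriv completedRiemannZeta s' := by
    rw [hv]
    exact logDeriv_completed_one_sub hs'0 hs'1
  have h3 : logDeriv completedRiemannZeta v =
      logDeriv Complex.Gammaℝ v + logDeriv riemannZeta v :=
    logDeriv_completed_split hvim hζv
  have hzv : logDeriv riemannZeta v =
      - logDeriv Complex.Gammaℝ s' - logDeriv Complex.Gammaℝ v := by
    rw [h2, h1] at h3
    linear_combination -h3
  -- relate the goal's second term to logDeriv ζ v
  have hterm2 : (deriv riemannZeta w / riemannZeta w).re = (logDeriv riemannZeta v).re := by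
    rw [hwv, deriv_riemannZeta_conj hv1, riemannZeta_conj' hv1, ← map_div₀]
    exact Complex.conj_re _
  -- real parts of the Gammaℝ terms
  have hGs : (logDeriv Complex.Gammaℝ s').re =
      -Real.log Real.pi / 2 + (logDeriv Complex.Gamma (s' / 2)).re / 2 := by
    have := congrArg Complex.re (logDeriv_Gammaℝ_eq hs'im)
    rw [this]
    rw [Complex.add_re]
    congr 1
    · rw [show -(Real.log Real.pi : ℂ) / 2 = ((-Real.log Real.pi / 2 : ℝ) : ℂ) by push_cast; ring]
      exact Complex.ofReal_re _
    · rw [show (2 : ℂ) = ((2 : ℝ) : ℂ) by norm_num, Complex.div_ofReal_re]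
  have hGv : (logDeriv Complex.Gammaℝ v).re =
      -Real.log Real.pi / 2 + (logDeriv Complex.Gamma (v / 2)).re / 2 := by
    have := congrArg Complex.re (logDeriv_Gammaℝ_eq hvim)
    rw [this, Complex.add_re]
    congr 1
    · rw [show -(Real.log Real.pi : ℂ) / 2 = ((-Real.log Real.pi / 2 : ℝ) : ℂ) by push_cast; ring]
      exact Complex.ofReal_re _
    · rw [show (2 : ℂ) = ((2 : ℝ) : ℂ) by norm_num, Complex.div_ofReal_re]
  -- identify the digamma points
  have hx1 : s' / 2 = ((σ / 2 : ℝ) : ℂ) + ((T / 2 : ℝ) : ℂ) * Complex.I := by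
    rw [hs'eq]; push_cast; ring
  have hx2c : v / 2 = (starRingEnd ℂ) ((((1 - σ) / 2 : ℝ) : ℂ) + ((T / 2 : ℝ) : ℂ) * Complex.I) := by
    rw [← hvw, show (2:ℂ) = (starRingEnd ℂ) (2:ℂ) from (by simp [Complex.ext_iff]), ← map_div₀]
    congr 1
    rw [hw]; push_cast; ring
  have hx2im : ((((1 - σ) / 2 : ℝ) : ℂ) + ((T / 2 : ℝ) : ℂ) * Complex.I).im ≠ 0 := by
    rw [mk_im']
    positivity
  have hGv2 : (logDeriv Complex.Gamma (v / 2)).re =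
      (logDeriv Complex.Gamma ((((1 - σ) / 2 : ℝ) : ℂ) + ((T / 2 : ℝ) : ℂ) * Complex.I)).re := by
    rw [hx2c, logDeriv_Gamma_conj (ne_neg_nat_of_im_ne hx2im)]
    exact Complex.conj_re _
  -- apply the asymptotic
  have hT2 : (1:ℝ) ≤ T / 2 := by linarith
  have ha1 := hB' (σ / 2) (T / 2) (by linarith) (by linarith) hT2
  have ha2 := hB' ((1 - σ) / 2) (T / 2) (by linarith) (by linarith) hT2
  rw [← hx1] at ha1
  rw [← hGv2] at ha2
  -- final arithmetic
  have hlogT2 : Real.log (T / 2) = Real.log T - Real.log 2 := by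
    rw [Real.log_div hTne (by norm_num)]
  have hterm1 : (deriv riemannZeta s' / riemannZeta s').re = 0 := by
    rw [hz, zero_div, Complex.zero_re]
  rw [hterm1, hterm2, hzv]
  have hre : (- logDeriv Complex.Gammaℝ s' - logDeriv Complex.Gammaℝ v).re =
      - (logDeriv Complex.Gammaℝ s').re - (logDeriv Complex.Gammaℝ v).re := by
    simp [Complex.sub_re, Complex.neg_re]
  rw [hre, hGs, hGv]
  rw [hlogT2] at ha1 ha2
  have hπ : (0:ℝ) ≤ Real.log Real.pi := Real.log_nonneg (by linarith [Real.pi_gt_three])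
  have h2 : (0:ℝ) ≤ Real.log 2 := Real.log_nonneg (by norm_num)
  rw [abs_le] at ha1 ha2 ⊢
  constructor <;> [skip; skip] <;>
    [ (nlinarith [ha1.1, ha1.2, ha2.1, ha2.2]) ; (nlinarith [ha1.1, ha1.2, ha2.1, ha2.2]) ]
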